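/- Let Γ be a locally rectifiable Jordan curve, w ∉ Γ with δ(w) = dist(w,Γ), p ≥ 2, and F(z) = (w−z)^{-1}. Write Γ_{4w} = Γ ∩ B(w,4δ(w)) and Γ°_{4w} = Γ ∩ {5δ(w) ≤ |z−w| ≤ 6δ(w)}. If ℓ(Γ°_{4w}) ≥ 2δ(w), then ‖F‖_{B_p(Γ)}^p ≥ c δ(w)^{-p-1} ℓ(Γ_{4w}) for a constant c = c(p) > 0. Consequently ‖F‖_{B_p(Γ)}^p ≤ M δ(w)^{-p} implies ℓ(Γ_{4w}) ≤ (M/c) δ(w). -/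

import Mathlib

/-!
For `η ∈ Γ_{4w}` and `ζ ∈ Γ°_{4w}` the integrand of the Besov norm is
`|ζ - η|^{p-2} / (|η - w| |ζ - w|)^p ≥ δ^{p-2} / (24 δ²)^p`, because `|ζ - η| ≥ δ` and `p ≥ 2`.
Integrating over `Γ_{4w} × Γ°_{4w}` and using `ℓ(Γ°_{4w}) ≥ 2δ` gives the lower bound with
`c = 2 / 24^p`; the second claim follows by dividing by `c δ^{-p-1}`.
-/

open MeasureTheory Complex Set Metric
open scoped ENNReal Real

noncomputable section

/-- `γ : ℝ → ℂ` is an (injective) arc-length parametrization: the arc length of `γ` over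
`[s, t]` equals `t - s`. Its range is then a locally rectifiable Jordan curve through `∞`. -/
def IsArcLengthParam (γ : ℝ → ℂ) : Prop :=
  Function.Injective γ ∧
    ∀ s t : ℝ, s ≤ t → eVariationOn γ (Set.Icc s t) = ENNReal.ofReal (t - s)

/-- The boundary Besov `p`-norm (to the `p`-th power) of the test function
`F(z) = (w - z)⁻¹` on the curve parametrized by arc length by `γ`:
`‖F‖_{B_p(Γ)}^p = ∫_Γ ∫_Γ |F(ζ) - F(η)|^p |ζ - η|^{-2} |dζ| |dη|`. -/
def besovTest (p : ℝ) (γ : ℝ → ℂ) (w : ℂ) : ℝ≥0∞ :=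
  ∫⁻ s : ℝ, ∫⁻ t : ℝ,
    ENNReal.ofReal (‖(w - γ s)⁻¹ - (w - γ t)⁻¹‖ ^ p * dist (γ s) (γ t) ^ (-2 : ℝ))

theorem lipschitzWith_one_of_eVariationOn_Icc_le {E : Type*} [PseudoEMetricSpace E] {f : ℝ → E}
    (hf : ∀ s t, s ≤ t → eVariationOn f (Icc s t) ≤ ENNReal.ofReal (t - s)) :
    LipschitzWith 1 f := by
  have hle : ∀ s t, s ≤ t → edist (f s) (f t) ≤ edist s t := fun s t hst =>
    calc edist (f s) (f t) ≤ eVariationOn f (Icc s t) :=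
          eVariationOn.edist_le f ⟨le_rfl, hst⟩ ⟨hst, le_rfl⟩
      _ ≤ ENNReal.ofReal (t - s) := hf s t hst
      _ = edist s t := by
        rw [edist_dist, Real.dist_eq, abs_sub_comm, abs_of_nonneg (sub_nonneg.2 hst)]
  intro s t
  rw [ENNReal.coe_one, one_mul]
  rcases le_total s t with hst | hts
  · exact hle s t hst
  · rw [edist_comm, edist_comm s]; exact hle t s hts

theorem IsArcLengthParam.continuous {γ : ℝ → ℂ} (hγ : IsArcLengthParam γ) : Continuous γ :=
  (lipschitzWith_one_of_eVariationOn_Icc_le fun s t hst => (hγ.2 s t hst).le).continuous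

theorem norm_inv_sub_inv {𝕜 : Type*} [NormedField 𝕜] {w z ζ : 𝕜} (hz : z ≠ w) (hζ : ζ ≠ w) :
    ‖(w - z)⁻¹ - (w - ζ)⁻¹‖ = dist z ζ / (dist z w * dist ζ w) := by
  rw [inv_sub_inv (sub_ne_zero.2 hz.symm) (sub_ne_zero.2 hζ.symm), norm_div, norm_mul,
    sub_sub_sub_cancel_left, dist_eq_norm, dist_comm z, dist_comm ζ, dist_eq_norm, dist_eq_norm]

theorem rpow_div_mul_rpow_neg_two {D q : ℝ} (p : ℝ) (hD : 0 < D) (hq : 0 < q) :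
    (D / q) ^ p * D ^ (-2 : ℝ) = D ^ (p - 2) / q ^ p := by
  rw [Real.div_rpow hD.le hq.le, Real.rpow_sub hD, Real.rpow_neg hD.le, Real.rpow_two]
  ring

theorem rpow_div_mul_rpow_neg_two_le {p d D q Q : ℝ} (hp : 2 ≤ p) (hd : 0 < d) (hdD : d ≤ D)
    (hq : 0 < q) (hqQ : q ≤ Q) :
    (d / Q) ^ p * d ^ (-2 : ℝ) ≤ (D / q) ^ p * D ^ (-2 : ℝ) := by
  rw [rpow_div_mul_rpow_neg_two p hd (hq.trans_le hqQ),
    rpow_div_mul_rpow_neg_two p (hd.trans_le hdD) hq]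
  have hp₂ : 0 ≤ p - 2 := by linarith
  have hD : 0 < D := hd.trans_le hdD
  gcongr

theorem besov_kernel_lower_bound {𝕜 : Type*} [NormedField 𝕜] {p d : ℝ} (hp : 2 ≤ p) (hd : 0 < d)
    {w z ζ : 𝕜} (hz₁ : d ≤ dist z w) (hz₂ : dist z w < 4 * d) (hζ₁ : 5 * d ≤ dist ζ w)
    (hζ₂ : dist ζ w ≤ 6 * d) :
    d ^ (-p - 2) / 24 ^ p ≤ ‖(w - z)⁻¹ - (w - ζ)⁻¹‖ ^ p * dist z ζ ^ (-2 : ℝ) := by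
  have hz : z ≠ w := dist_pos.1 (hd.trans_le hz₁)
  have hζ : ζ ≠ w := dist_pos.1 (by linarith)
  have hsep : d ≤ dist z ζ := by linarith [dist_triangle ζ z w, dist_comm z ζ]
  have hprod : dist z w * dist ζ w ≤ 24 * d ^ 2 := by nlinarith [dist_nonneg (x := z) (y := w)]
  calc d ^ (-p - 2) / 24 ^ p = (d / (24 * d ^ 2)) ^ p * d ^ (-2 : ℝ) := by
        rw [rpow_div_mul_rpow_neg_two p hd (by positivity), Real.mul_rpow (by norm_num)
          (by positivity), ← Real.rpow_natCast, ← Real.rpow_mul hd.le,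
          show p - 2 = (-p - 2) + (2 : ℕ) * p by push_cast; ring, Real.rpow_add hd]
        field_simp
    _ ≤ (dist z ζ / (dist z w * dist ζ w)) ^ p * dist z ζ ^ (-2 : ℝ) :=
        rpow_div_mul_rpow_neg_two_le hp hd hsep
          (mul_pos (hd.trans_le hz₁) (by linarith)) hprod
    _ = ‖(w - z)⁻¹ - (w - ζ)⁻¹‖ ^ p * dist z ζ ^ (-2 : ℝ) := by rw [norm_inv_sub_inv hz hζ]

theorem mul_measure_mul_measure_le_lintegral_lintegral {α β : Type*} [MeasurableSpace α]
    [MeasurableSpace β] {μ : Measure α} {ν : Measure β} {f : α → β → ℝ≥0∞} {A : Set α}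
    {B : Set β} {c : ℝ≥0∞} (hA : MeasurableSet A) (hB : MeasurableSet B)
    (hf : ∀ s ∈ A, ∀ t ∈ B, c ≤ f s t) :
    c * ν B * μ A ≤ ∫⁻ s, ∫⁻ t, f s t ∂ν ∂μ :=
  calc c * ν B * μ A = ∫⁻ _ in A, ∫⁻ _ in B, c ∂ν ∂μ := by
        simp only [setLIntegral_const]
    _ ≤ ∫⁻ s in A, ∫⁻ t in B, f s t ∂ν ∂μ :=
        setLIntegral_mono' hA fun s hs => setLIntegral_mono' hB fun t ht => hf s hs t ht
    _ ≤ ∫⁻ s in A, ∫⁻ t, f s t ∂ν ∂μ := lintegral_mono fun s => setLIntegral_le_lintegral _ _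
    _ ≤ ∫⁻ s, ∫⁻ t, f s t ∂ν ∂μ := setLIntegral_le_lintegral _ _

theorem ENNReal.le_ofReal_div_of_ofReal_mul_le {a b : ℝ} {x : ℝ≥0∞} (ha : 0 < a)
    (h : ENNReal.ofReal a * x ≤ ENNReal.ofReal b) : x ≤ ENNReal.ofReal (b / a) := by
  rwa [ENNReal.ofReal_div_of_pos ha, ENNReal.le_div_iff_mul_le (.inl (by simpa using ha))
    (.inl ENNReal.ofReal_ne_top), mul_comm]

/-- For `p ≥ 2`, `w ∉ Γ`, `F(z) = (w-z)⁻¹`, `Γ_{4w} = Γ ∩ B(w, 4δ(w))` and the annular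
piece `Γ°_{4w} = Γ ∩ {5δ(w) ≤ |z-w| ≤ 6δ(w)}`: if `ℓ(Γ°_{4w}) ≥ 2δ(w)`, then
`‖F‖_{B_p(Γ)}^p ≥ c δ(w)^{-p-1} ℓ(Γ_{4w})` with `c = c(p) > 0`; consequently
`‖F‖_{B_p(Γ)}^p ≤ M δ(w)^{-p}` implies `ℓ(Γ_{4w}) ≤ (M/c) δ(w)`. -/
theorem statement16 (p : ℝ) (hp : 2 ≤ p) :
    ∃ c : ℝ, 0 < c ∧
      ∀ (γ : ℝ → ℂ) (w : ℂ) (d : ℝ),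
        IsArcLengthParam γ → w ∉ Set.range γ →
        d = Metric.infDist w (Set.range γ) → 0 < d →
        ENNReal.ofReal (2 * d) ≤
          volume (γ ⁻¹' {z : ℂ | 5 * d ≤ dist z w ∧ dist z w ≤ 6 * d}) →
        (ENNReal.ofReal (c * d ^ (-p - 1)) *
            volume (γ ⁻¹' Metric.ball w (4 * d)) ≤ besovTest p γ w) ∧
        (∀ M : ℝ, 0 < M → besovTest p γ w ≤ ENNReal.ofReal (M * d ^ (-p)) →
          volume (γ ⁻¹' Metric.ball w (4 * d)) ≤ ENNReal.ofReal ((M / c) * d)) := by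
  refine ⟨2 / 24 ^ p, by positivity, fun γ w d hγ _ hδ hd hannulus => ?_⟩
  have hγc := hγ.continuous
  have hdist : ∀ s, d ≤ dist (γ s) w := fun s =>
    hδ ▸ (infDist_le_dist_of_mem (mem_range_self s)).trans_eq (dist_comm _ _)
  have hannulus_meas : MeasurableSet {z : ℂ | 5 * d ≤ dist z w ∧ dist z w ≤ 6 * d} :=
    (isClosed_le continuous_const (continuous_id.dist continuous_const)).inter
      (isClosed_le (continuous_id.dist continuous_const) continuous_const) |>.measurableSet
  have hkernel := mul_measure_mul_measure_le_lintegral_lintegral (μ := volume) (ν := volume)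
    (hγc.measurable measurableSet_ball) (hγc.measurable hannulus_meas)
    (c := ENNReal.ofReal (d ^ (-p - 2) / 24 ^ p)) fun s hs t ht =>
      ENNReal.ofReal_le_ofReal (besov_kernel_lower_bound hp hd (hdist s) hs ht.1 ht.2)
  have lower : ENNReal.ofReal (2 / 24 ^ p * d ^ (-p - 1)) *
      volume (γ ⁻¹' Metric.ball w (4 * d)) ≤ besovTest p γ w := by
    refine le_trans ?_ hkernel
    rw [show 2 / 24 ^ p * d ^ (-p - 1) = d ^ (-p - 2) / 24 ^ p * (2 * d) by
      rw [show -p - 2 = -p - 1 - 1 by ring, Real.rpow_sub_one hd.ne' (-p - 1),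
        Real.rpow_sub_one hd.ne' (-p)]; field_simp,
      ENNReal.ofReal_mul (by positivity)]
    gcongr
  refine ⟨lower, fun M _ hM => ?_⟩
  convert ENNReal.le_ofReal_div_of_ofReal_mul_le (by positivity) (lower.trans hM) using 2
  rw [Real.rpow_sub_one hd.ne']
  field_simp
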